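/- Let X be a locally convex space whose topology is induced by a directed family (‖·‖_α)_{α∈I} of seminorms. An operator T ∈ GL(X) is topologically expansive if and only if for every x ∈ X \ {0} there exists α ∈ I such that ‖x‖_α ≠ 0 and, for each y ∈ Orb(x,T) := {Tⁿx : n ∈ ℤ}, there exists n ∈ ℤ with ‖Tⁿy‖_α ≥ 2‖y‖_α. -/

import Mathlib

open Filter Topology Set

/-!
If the `pα`-orbit of `x` is unbounded, then for any orbit point `Tᵐ x` some orbit point is at least
twice as large; the extra requirement `pγ x ≠ 0` is met by enlarging `α` by a seminorm not
vanishing at `x`. Such a seminorm exists because a vector killed by all seminorms is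
topologically indistinguishable from `0`, whereas the continuous function `pα ∘ Tⁿ` separates `x`
from `0`. Conversely, doubling repeatedly along the orbit, starting from `pα x > 0`, yields orbit
points with `pα ≥ 2ᵏ pα x` for every `k`.
-/

/-- `T ∈ GL(X)` is topologically expansive: for each nonzero `x` there is an index `α` such
that `sup_{n∈ℤ} pα (Tⁿ x) = ∞`. -/
def TopologicallyExpansive {𝕂 : Type*} [RCLike 𝕂] {X : Type*} [AddCommGroup X] [Module 𝕂 X]
    [TopologicalSpace X] [IsTopologicalAddGroup X]
    {I : Type*} (p : I → Seminorm 𝕂 X) (T : X ≃L[𝕂] X) : Prop :=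
  ∀ x : X, x ≠ 0 → ∃ α : I, ∀ R : ℝ, ∃ n : ℤ, R < p α ((T ^ n) x)

theorem ContinuousLinearEquiv.zpow_add_apply {𝕂 X : Type*} [Semiring 𝕂] [AddCommMonoid X]
    [Module 𝕂 X] [TopologicalSpace X] (T : X ≃L[𝕂] X) (n m : ℤ) (x : X) :
    (T ^ (n + m)) x = (T ^ n) ((T ^ m) x) := by
  rw [zpow_add]
  rfl

theorem WithSeminorms.specializes_zero {𝕜 E ι : Type*} [NormedField 𝕜] [AddCommGroup E]
    [Module 𝕜 E] [Nonempty ι] [TopologicalSpace E] {p : SeminormFamily 𝕜 E ι}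
    (hp : WithSeminorms p) {x : E} (hx : ∀ i, p i x = 0) : x ⤳ 0 := by
  rw [specializes_iff_pure, ← tendsto_id', hp.tendsto_nhds]
  intro i ε hε
  simpa [hx i] using hε

theorem WithSeminorms.exists_seminorm_ne_zero {𝕜 E ι : Type*} [NormedField 𝕜] [AddCommGroup E]
    [Module 𝕜 E] [Nonempty ι] [TopologicalSpace E] {p : SeminormFamily 𝕜 E ι}
    (hp : WithSeminorms p) {f : E → ℝ} (hf : Continuous f) {x : E} (hfx : f x ≠ f 0) :
    ∃ i, p i x ≠ 0 := by
  by_contra! hx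
  exact hfx ((hp.specializes_zero hx).map hf).eq

theorem forall_exists_lt_of_forall_exists_two_mul_le {ι : Type*} {f : ι → ℝ} {i₀ : ι}
    (hi₀ : 0 < f i₀) (hdouble : ∀ i, ∃ j, 2 * f i ≤ f j) (R : ℝ) : ∃ j, R < f j := by
  have hpow : ∀ k : ℕ, ∃ j, 2 ^ k * f i₀ ≤ f j := by
    intro k
    induction k with
    | zero => exact ⟨i₀, by simp⟩
    | succ k ih =>
      obtain ⟨i, hi⟩ := ih
      obtain ⟨j, hj⟩ := hdouble i
      exact ⟨j, by rw [pow_succ']; nlinarith⟩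
  obtain ⟨k, hk⟩ := pow_unbounded_of_one_lt (R / f i₀) one_lt_two
  obtain ⟨j, hj⟩ := hpow k
  exact ⟨j, ((div_lt_iff₀ hi₀).mp hk).trans_le hj⟩

theorem topologicallyExpansive_iff_general
    {𝕂 : Type*} [RCLike 𝕂] {X : Type*} [AddCommGroup X] [Module 𝕂 X]
    [TopologicalSpace X] [IsTopologicalAddGroup X]
    {I : Type*} [Nonempty I] (p : I → Seminorm 𝕂 X) (hp : WithSeminorms p)
    (hdir : ∀ α β : I, ∃ γ : I, p α ≤ p γ ∧ p β ≤ p γ)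
    (T : X ≃L[𝕂] X) :
    TopologicallyExpansive p T ↔
      ∀ x : X, x ≠ 0 → ∃ α : I, p α x ≠ 0 ∧
        ∀ y ∈ Set.range (fun n : ℤ => (T ^ n) x), ∃ n : ℤ, 2 * p α y ≤ p α ((T ^ n) y) := by
  constructor
  · intro h x hx
    obtain ⟨α, hα⟩ := h x hx
    obtain ⟨n, hn⟩ := hα 0
    obtain ⟨β, hβ⟩ := hp.exists_seminorm_ne_zero
      ((hp.continuous_seminorm α).comp (T ^ n).continuous) (f := fun z => p α ((T ^ n) z))
      (by simpa using hn.ne')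
    obtain ⟨γ, hαγ, hβγ⟩ := hdir α β
    refine ⟨γ, ((apply_nonneg _ _).lt_of_ne' hβ |>.trans_le (hβγ x)).ne', ?_⟩
    rintro _ ⟨m, rfl⟩
    obtain ⟨k, hk⟩ := hα (2 * p γ ((T ^ m) x))
    refine ⟨k - m, ?_⟩
    rw [← T.zpow_add_apply, sub_add_cancel]
    exact hk.le.trans (hαγ _)
  · intro h x hx
    obtain ⟨α, hαx, horbit⟩ := h x hx
    refine ⟨α, forall_exists_lt_of_forall_exists_two_mul_le (f := fun n : ℤ => p α ((T ^ n) x))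
      (i₀ := 0) ((apply_nonneg _ _).lt_of_ne' hαx) fun m => ?_⟩
    obtain ⟨n, hn⟩ := horbit _ ⟨m, rfl⟩
    exact ⟨n + m, by rwa [T.zpow_add_apply]⟩

/-- An operator `T ∈ GL(X)` on a locally convex space, with topology induced by the directed
seminorm family `p`, is topologically expansive if and only if for every `x ≠ 0` there exists
`α` such that `pα x ≠ 0` and, for each `y` in the orbit `{Tⁿ x : n ∈ ℤ}`, there exists `n ∈ ℤ`
with `pα (Tⁿ y) ≥ 2 pα y`. -/
theorem topologicallyExpansive_iff
    {𝕂 : Type*} [RCLike 𝕂] {X : Type*} [AddCommGroup X] [Module 𝕂 X]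
    [TopologicalSpace X] [IsTopologicalAddGroup X] [ContinuousSMul 𝕂 X]
    {I : Type*} [Nonempty I] (p : I → Seminorm 𝕂 X) (hp : WithSeminorms p)
    (hdir : ∀ α β : I, ∃ γ : I, p α ≤ p γ ∧ p β ≤ p γ)
    (T : X ≃L[𝕂] X) :
    TopologicallyExpansive p T ↔
      ∀ x : X, x ≠ 0 → ∃ α : I, p α x ≠ 0 ∧
        ∀ y ∈ Set.range (fun n : ℤ => (T ^ n) x), ∃ n : ℤ, 2 * p α y ≤ p α ((T ^ n) y) :=
  topologicallyExpansive_iff_general p hp hdir T
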